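/- arXiv:1408.1506 — 2 statements merged into one kernel-verified Lean document; each statement's English description precedes it below -/
import Mathlib

section
/- Let L ⊂ M_{n×T}(ℂ) be a lattice of rank k and suppose there are positive constants K, a, b such that ∑_{X ∈ L, 0 < ‖X‖_F ≤ M} 1/det(I + c X X*)^{n_r} ≤ K c^{−a} M^b for all c > 0 and M ≥ 1. Then for the coding scheme C_L(ρ) = ρ^{−rT/k} L(ρ^{rT/k}) at multiplexing gain r, the union-bound error estimate satisfies P_e(ρ) ≤ K' ρ^{−(a − rT(2a+b)/k)} for a constant K', i.e., the achieved diversity gain is at least (a − rT(2a+b)/k)⁺. -/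
open Matrix

/-- The Frobenius norm of a complex matrix. -/
noncomputable def frobNorm {n T : ℕ} (X : Matrix (Fin n) (Fin T) ℂ) : ℝ :=
  Real.sqrt (((X * Xᴴ).trace).re)

theorem stmt11 (n T k nr : ℕ) (hk : 0 < k) (hT : 0 < T)
    (b : Fin k → Matrix (Fin n) (Fin T) ℂ)
    (hb : LinearIndependent ℝ b)
    (L : Set (Matrix (Fin n) (Fin T) ℂ))
    (hL : ∀ X, X ∈ L ↔ X ∈ Submodule.span ℤ (Set.range b))
    (K a bc : ℝ) (hK : 0 < K) (ha : 0 < a) (hbc : 0 < bc)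
    (hsum : ∀ c : ℝ, 0 < c → ∀ M : ℝ, 1 ≤ M →
      ∑' X : {X : Matrix (Fin n) (Fin T) ℂ // X ∈ L ∧ X ≠ 0 ∧ frobNorm X ≤ M},
          1 / (((1 : Matrix (Fin n) (Fin n) ℂ) + (c : ℂ) • (X.1 * X.1ᴴ)).det).re ^ nr
        ≤ K * c ^ (-a) * M ^ bc)
    (r : ℝ) (hr : 0 ≤ r) :
    ∃ K' : ℝ, ∀ ρ : ℝ, 1 ≤ ρ →
      ∑' X : {X : Matrix (Fin n) (Fin T) ℂ // X ∈ L ∧ X ≠ 0 ∧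
          frobNorm X ≤ 2 * ρ ^ (r * T / k)},
          1 / (((1 : Matrix (Fin n) (Fin n) ℂ) +
              ((ρ ^ (1 - 2 * r * T / k) : ℝ) : ℂ) • (X.1 * X.1ᴴ)).det).re ^ nr
        ≤ K' * ρ ^ (-(a - r * T * (2 * a + bc) / k)) := by
  refine ⟨K * 2 ^ bc, fun ρ hρ => ?_⟩
  have hρ0 : (0 : ℝ) < ρ := lt_of_lt_of_le one_pos hρ
  have hc : 0 < ρ ^ (1 - 2 * r * T / k) := Real.rpow_pos_of_pos hρ0 _
  have hexp : 0 ≤ r * T / k := by positivity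
  have hM1 : (1 : ℝ) ≤ ρ ^ (r * T / k) := Real.one_le_rpow hρ hexp
  have hM : (1 : ℝ) ≤ 2 * ρ ^ (r * T / k) := by nlinarith
  have h := hsum _ hc _ hM
  refine h.trans (le_of_eq ?_)
  have hMp : (0 : ℝ) ≤ ρ ^ (r * T / k) := le_of_lt (Real.rpow_pos_of_pos hρ0 _)
  rw [Real.mul_rpow (by norm_num) hMp, ← Real.rpow_mul hρ0.le, ← Real.rpow_mul hρ0.le]
  have he : (-(a - r * (T:ℝ) * (2 * a + bc) / k)) =
      (1 - 2 * r * T / k) * (-a) + (r * T / k) * bc := by ring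
  rw [he, Real.rpow_add hρ0]
  ring
end

section
/- Let L ⊂ M_{n×T}(ℂ) be a full-rank lattice of dimension k = 2nT with ‖X‖_F ≥ 1 for all nonzero X ∈ L, and let n_r > nT + 1 be the number of receive antennas. Then the union-bound error estimate of the scheme C_L(ρ) at multiplexing gain r satisfies P_e(ρ) ≤ K ρ^{−(1 − r/n) n_r} for a constant K; in particular any full-dimensional lattice achieves full multiplexing gain r = n when n_r > nT + 1. -/
open Matrix

/-!
For `c ≥ 0` the eigenvalues of `1 + c XXᴴ` are `1 + c μᵢ` with `μᵢ ≥ 0`, so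
`det (1 + c XXᴴ) ≥ 1 + c tr (XXᴴ) ≥ c ‖X‖²` (Frobenius norm). Each term of the union bound is
therefore at most `c^(-n_r) ‖X‖^(-2 n_r)`, and `∑_{X ∈ L∖0} ‖X‖^(-2 n_r)` is a convergent
Epstein zeta series: the minimum-distance hypothesis makes `L` discrete and its rank is at most
`2nT < 2 n_r`. With `c = ρ^(1 - r/n)` this gives `K = ∑_{X ∈ L∖0} ‖X‖^(-2 n_r)`.
-/

open scoped ComplexOrder

attribute [local instance] Matrix.frobeniusNormedAddCommGroup Matrix.frobeniusNormedSpace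

lemma Finset.one_add_sum_le_prod_one_add {ι : Type*} (s : Finset ι) {f : ι → ℝ}
    (hf : ∀ i ∈ s, 0 ≤ f i) : 1 + ∑ i ∈ s, f i ≤ ∏ i ∈ s, (1 + f i) := by
  induction s using Finset.cons_induction with
  | empty => simp
  | cons a s _ ih =>
    rw [Finset.prod_cons, Finset.sum_cons]
    have hfa := hf a (Finset.mem_cons_self a s)
    have ih := ih fun i hi => hf i (Finset.mem_cons_of_mem hi)
    have hs : 0 ≤ ∑ i ∈ s, f i := Finset.sum_nonneg fun i hi => hf i (Finset.mem_cons_of_mem hi)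
    nlinarith

section Determinant

variable {𝕜 n : Type*} [RCLike 𝕜] [Fintype n] [DecidableEq n]

lemma Matrix.det_conjStarAlgAut (U : unitary (Matrix n n 𝕜)) (M : Matrix n n 𝕜) :
    (Unitary.conjStarAlgAut 𝕜 _ U M).det = M.det := by
  rw [Unitary.conjStarAlgAut_apply, det_mul, det_mul, mul_comm, ← mul_assoc, ← det_mul,
    Unitary.coe_star_mul_self, det_one, one_mul]

lemma Matrix.IsHermitian.det_one_add {A : Matrix n n 𝕜} (hA : A.IsHermitian) :
    (1 + A).det = ∏ i, (1 + hA.eigenvalues i : 𝕜) := by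
  conv_lhs => rw [hA.spectral_theorem,
    ← map_one (Unitary.conjStarAlgAut 𝕜 _ hA.eigenvectorUnitary), ← map_add,
    det_conjStarAlgAut, ← diagonal_one, diagonal_add, det_diagonal]
  simp

lemma Matrix.PosSemidef.one_add_re_trace_le_re_det_one_add {A : Matrix n n 𝕜}
    (hA : A.PosSemidef) : 1 + RCLike.re A.trace ≤ RCLike.re (1 + A).det := by
  rw [hA.isHermitian.det_one_add, hA.isHermitian.trace_eq_sum_eigenvalues]
  norm_cast
  exact Finset.univ.one_add_sum_le_prod_one_add fun i _ => hA.eigenvalues_nonneg i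

end Determinant

lemma Matrix.re_trace_mul_conjTranspose_self {𝕜 m k : Type*} [RCLike 𝕜] [Fintype m] [Fintype k]
    (X : Matrix m k 𝕜) : RCLike.re (X * Xᴴ).trace = ‖X‖ ^ 2 := by
  rw [frobenius_norm_def, ← Real.rpow_natCast, ← Real.rpow_mul (by positivity)]
  simp [trace, mul_apply, RCLike.mul_conj]

lemma frobNorm_eq_norm {n T : ℕ} (X : Matrix (Fin n) (Fin T) ℂ) : frobNorm X = ‖X‖ := by
  rw [frobNorm, ← RCLike.re_eq_complex_re, re_trace_mul_conjTranspose_self,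
    Real.sqrt_sq (norm_nonneg X)]

section UnionBound

variable {m k : Type*} [Fintype m] [DecidableEq m] [Fintype k]

lemma mul_norm_sq_le_re_det_one_add_smul (X : Matrix m k ℂ) {c : ℝ} (hc : 0 ≤ c) :
    c * ‖X‖ ^ 2 ≤ (1 + (c : ℂ) • (X * Xᴴ)).det.re := by
  have hB : ((c : ℂ) • (X * Xᴴ)).PosSemidef :=
    (posSemidef_self_mul_conjTranspose X).smul (by exact_mod_cast hc)
  calc c * ‖X‖ ^ 2 ≤ 1 + RCLike.re ((c : ℂ) • (X * Xᴴ)).trace := by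
        rw [trace_smul, smul_eq_mul, RCLike.re_eq_complex_re, Complex.re_ofReal_mul,
          ← RCLike.re_eq_complex_re, re_trace_mul_conjTranspose_self]
        linarith
    _ ≤ _ := hB.one_add_re_trace_le_re_det_one_add

lemma one_div_re_det_one_add_smul_pow_le {X : Matrix m k ℂ} (hX : X ≠ 0) {c : ℝ} (hc : 0 < c)
    (N : ℕ) : 1 / (1 + (c : ℂ) • (X * Xᴴ)).det.re ^ N ≤ (c ^ N)⁻¹ * ‖X‖⁻¹ ^ (2 * N) := by
  have hpos : 0 < c * ‖X‖ ^ 2 := by have : 0 < ‖X‖ := norm_pos_iff.mpr hX; positivity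
  calc 1 / (1 + (c : ℂ) • (X * Xᴴ)).det.re ^ N ≤ 1 / (c * ‖X‖ ^ 2) ^ N := by
        gcongr; exact mul_norm_sq_le_re_det_one_add_smul X hc.le
    _ = (c ^ N)⁻¹ * ‖X‖⁻¹ ^ (2 * N) := by
        rw [mul_pow, ← pow_mul, inv_pow, one_div, mul_inv, mul_comm 2]

lemma tsum_one_div_re_det_one_add_smul_pow_le (Λ : Submodule ℤ (Matrix m k ℂ)) {N : ℕ}
    (hΛ : Summable fun x : Λ => ‖x‖⁻¹ ^ (2 * N))
    (P : Matrix m k ℂ → Prop) (hP : ∀ X, P X → X ∈ Λ ∧ X ≠ 0) {c : ℝ} (hc : 0 < c) :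
    ∑' X : {X // P X}, 1 / (1 + (c : ℂ) • (X.1 * X.1ᴴ)).det.re ^ N
      ≤ (c ^ N)⁻¹ * ∑' x : Λ, ‖x‖⁻¹ ^ (2 * N) := by
  let ι : {X // P X} → Λ := fun X => ⟨X.1, (hP X.1 X.2).1⟩
  have hι : ι.Injective := fun X Y h => Subtype.ext (Subtype.ext_iff.mp h :)
  have hsum : Summable fun X : {X // P X} => ‖ι X‖⁻¹ ^ (2 * N) := hΛ.comp_injective hι
  have hterm (X : {X // P X}) : 1 / (1 + (c : ℂ) • (X.1 * X.1ᴴ)).det.re ^ N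
      ≤ (c ^ N)⁻¹ * ‖ι X‖⁻¹ ^ (2 * N) :=
    one_div_re_det_one_add_smul_pow_le (hP X.1 X.2).2 hc N
  have hterm_nonneg (X : {X // P X}) : 0 ≤ 1 / (1 + (c : ℂ) • (X.1 * X.1ᴴ)).det.re ^ N := by
    have := (by positivity : 0 ≤ c * ‖X.1‖ ^ 2).trans (mul_norm_sq_le_re_det_one_add_smul X.1 hc.le)
    positivity
  calc _ ≤ ∑' X, (c ^ N)⁻¹ * ‖ι X‖⁻¹ ^ (2 * N) :=
        Summable.tsum_le_tsum hterm (.of_nonneg_of_le hterm_nonneg hterm (hsum.mul_left _))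
          (hsum.mul_left _)
    _ = (c ^ N)⁻¹ * ∑' X, ‖ι X‖⁻¹ ^ (2 * N) := tsum_mul_left
    _ ≤ _ := by
        gcongr
        exact hsum.tsum_le_tsum_of_inj ι hι (fun _ _ => by positivity) (fun _ => le_rfl) hΛ

end UnionBound

lemma discreteTopology_of_le_norm {E : Type*} [NormedAddCommGroup E] (Λ : Submodule ℤ E) {δ : ℝ}
    (hδ : 0 < δ) (h : ∀ x ∈ Λ, x ≠ 0 → δ ≤ ‖x‖) : DiscreteTopology Λ := by
  refine discreteTopology_iff_isOpen_singleton_zero.mpr ⟨Metric.ball 0 δ, Metric.isOpen_ball, ?_⟩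
  ext x
  simp only [Set.mem_preimage, mem_ball_zero_iff, Set.mem_singleton_iff]
  constructor
  · intro hx
    by_contra h0
    exact (h x x.2 (by simpa using h0)).not_gt hx
  · rintro rfl
    simpa using hδ

theorem stmt12_general (n T nr : ℕ) (hT : 0 < T) (hnr : n * T + 1 < nr)
    (b : Fin (2 * n * T) → Matrix (Fin n) (Fin T) ℂ)
    (L : Set (Matrix (Fin n) (Fin T) ℂ))
    (hL : ∀ X, X ∈ L ↔ X ∈ Submodule.span ℤ (Set.range b))
    (hmin : ∀ X ∈ L, X ≠ 0 → 1 ≤ frobNorm X)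
    (r : ℝ) :
    ∃ K : ℝ, ∀ ρ : ℝ, 1 ≤ ρ →
      ∑' X : {X : Matrix (Fin n) (Fin T) ℂ // X ∈ L ∧ X ≠ 0 ∧
          frobNorm X ≤ 2 * ρ ^ (r * T / (2 * n * T : ℝ))},
          1 / (((1 : Matrix (Fin n) (Fin n) ℂ) +
              ((ρ ^ (1 - 2 * r * T / (2 * n * T : ℝ)) : ℝ) : ℂ) • (X.1 * X.1ᴴ)).det).re ^ nr
        ≤ K * ρ ^ (-((1 - r / n) * nr)) := by
  let Λ : Submodule ℤ (Matrix (Fin n) (Fin T) ℂ) := Submodule.span ℤ (Set.range b)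
  -- typed by the lemma: an explicit `DiscreteTopology Λ` would use the product topology on
  -- matrices, not the Frobenius one that `ZLattice.summable_norm_pow_inv` is stated for
  have hdiscrete := discreteTopology_of_le_norm Λ one_pos fun X hX hX0 =>
    frobNorm_eq_norm X ▸ hmin X ((hL X).2 hX) hX0
  have hrank : Module.finrank ℤ Λ < 2 * nr :=
    (finrank_range_le_card b).trans_lt (by rw [Fintype.card_fin, mul_assoc]; omega)
  refine ⟨∑' x : Λ, ‖x‖⁻¹ ^ (2 * nr), fun ρ hρ => ?_⟩
  have hexp : 1 - 2 * r * T / (2 * n * T : ℝ) = 1 - r / n := by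
    rw [mul_div_mul_right _ _ (by positivity), mul_div_mul_left _ _ two_ne_zero]
  have hpow : ((ρ ^ (1 - r / n)) ^ nr)⁻¹ = ρ ^ (-((1 - r / n) * nr)) := by
    rw [← Real.rpow_natCast, ← Real.rpow_mul (by linarith), Real.rpow_neg (by linarith)]
  rw [hexp, ← hpow, mul_comm _ (_ ^ nr)⁻¹]
  refine tsum_one_div_re_det_one_add_smul_pow_le Λ (ZLattice.summable_norm_pow_inv Λ _ hrank) _
    ?_ (by positivity)
  exact fun X hX => ⟨(hL X).1 hX.1, hX.2.1⟩

theorem stmt12 (n T nr : ℕ) (hn : 0 < n) (hT : 0 < T) (hnr : n * T + 1 < nr)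
    (b : Fin (2 * n * T) → Matrix (Fin n) (Fin T) ℂ)
    (hb : LinearIndependent ℝ b)
    (L : Set (Matrix (Fin n) (Fin T) ℂ))
    (hL : ∀ X, X ∈ L ↔ X ∈ Submodule.span ℤ (Set.range b))
    (hmin : ∀ X ∈ L, X ≠ 0 → 1 ≤ frobNorm X)
    (r : ℝ) (hr0 : 0 ≤ r) (hrn : r ≤ n) :
    ∃ K : ℝ, ∀ ρ : ℝ, 1 ≤ ρ →
      ∑' X : {X : Matrix (Fin n) (Fin T) ℂ // X ∈ L ∧ X ≠ 0 ∧
          frobNorm X ≤ 2 * ρ ^ (r * T / (2 * n * T : ℝ))},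
          1 / (((1 : Matrix (Fin n) (Fin n) ℂ) +
              ((ρ ^ (1 - 2 * r * T / (2 * n * T : ℝ)) : ℝ) : ℂ) • (X.1 * X.1ᴴ)).det).re ^ nr
        ≤ K * ρ ^ (-((1 - r / n) * nr)) :=
  stmt12_general n T nr hT hnr b L hL hmin r
end
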